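/- arXiv:0809.1622 — 4 statements merged into one kernel-verified Lean document; each statement's English description precedes it below -/
import Mathlib

section
/- Let K be a number field, S a finite set of places of K containing all archimedean places, 𝒪_S the ring of S-integers, and n ≥ 3. Let a ∈ 𝒪_S be nonzero and let x = (0, …, 0, 1) ∈ 𝒪_S^n. Then for every unimodular vector y = (a_1, …, a_n) ∈ 𝒪_S^n satisfying y ≡ x (mod a²𝒪_S) (i.e., a_i ∈ a²𝒪_S for 1 ≤ i ≤ n−1 and a_n − 1 ∈ a²𝒪_S), there exists a matrix g in the subgroup of SL_n(𝒪_S) generated by the elementary matrices e_ij(t) with i ≠ j and t ∈ a𝒪_S, such that g x = y (matrices acting on column vectors). -/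
/-!
`𝒪_S` is a localization of the Dedekind domain `𝓞 K` (the class group being finite, a power of
the denominator ideal of an `S`-integer is principal, generated by an element that is a unit
away from `S`), so `𝒪_S` is again a Dedekind domain. Write `y = (a²w, 1 + a²b)`. Since
`(a w, y_n)` is still unimodular and a Dedekind domain has stable rank at most `2 ≤ n - 1`, there
are `s_i` such that `z_i = a w_i + s_i y_n` generate the unit ideal, say `∑ c_i z_i = b`. Then
three rounds of level-`a` elementary operations carry `e_n = (0, 1)` to `(a z, 1)`, then to
`(a z, 1 + a² ∑ c_i z_i) = (a z, y_n)`, and finally to `(a z - y_n a s, y_n) = y`.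
-/

open IsDedekindDomain NumberField

/-- The elementary matrix `e_ij(t)`: the identity matrix with an extra entry `t` in position
`(i, j)` (where `i ≠ j`), as an element of `SL_n(R)`. -/
def elemMatrix {n : ℕ} {R : Type*} [CommRing R] (i j : Fin n) (hij : i ≠ j) (t : R) :
    Matrix.SpecialLinearGroup (Fin n) R :=
  ⟨Matrix.transvection i j t, Matrix.det_transvection_of_ne i j hij t⟩

/-- The standard basis vector `(0, …, 0, 1)`. -/
def lastStdVec (n : ℕ) (R : Type*) [CommRing R] : Fin n → R :=
  fun i => if (i : ℕ) = n - 1 then 1 else 0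

open scoped nonZeroDivisors

theorem Ideal.span_insert_range_eq_top_of_smul {R ι : Type*} [CommRing R] {r a : R} {v : ι → R}
    (h : Ideal.span (insert r (Set.range (a • v))) = ⊤) :
    Ideal.span (insert r (Set.range v)) = ⊤ := by
  refine eq_top_iff.mpr (h ▸ Ideal.span_le.mpr ?_)
  rintro _ (rfl | ⟨j, rfl⟩)
  · exact Ideal.subset_span (Set.mem_insert _ _)
  · exact Ideal.mul_mem_left _ a (Ideal.subset_span (Set.mem_insert_of_mem _ ⟨j, rfl⟩))

theorem Ideal.exists_add_mul_sub_one_mem {R ι : Type*} [CommRing R] {P : Finset ι}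
    {J : ι → Ideal R} {y : R} (hy : ∀ i ∈ P, IsCoprime (Ideal.span {y}) (J i)) (x : R) :
    ∃ s : R, ∀ i ∈ P, x + s * y - 1 ∈ J i := by
  obtain ⟨uy, huy, j, hj, huj⟩ := (Ideal.isCoprime_biInf hy).exists
  obtain ⟨u, rfl⟩ := Ideal.mem_span_singleton'.mp huy
  refine ⟨u * (1 - x), fun i hi => ?_⟩
  have hji : j ∈ J i := (biInf_le J hi : _ ≤ J i) hj
  have : x + u * (1 - x) * y - 1 = (x - 1) * j := by linear_combination (1 - x) * huj
  exact this ▸ Ideal.mul_mem_left _ _ hji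

namespace IsDedekindDomain

variable {R : Type*} [CommRing R] [IsDedekindDomain R]

theorem exists_pow_eq_span_singleton [Finite (ClassGroup R)] (I : Ideal R) :
    ∃ k ≠ 0, ∃ m : R, I ^ k = Ideal.span {m} := by
  refine ⟨Nat.card (ClassGroup R), Nat.card_pos.ne', ?_⟩
  rcases eq_or_ne I ⊥ with rfl | hI
  · exact ⟨0, by simp [Nat.card_pos.ne']⟩
  have hI' : I ∈ (Ideal R)⁰ := mem_nonZeroDivisors_of_ne_zero hI
  have hprin : (I ^ Nat.card (ClassGroup R)).IsPrincipal := by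
    rw [← ClassGroup.mk0_eq_one_iff (pow_mem hI' _)]
    rw [← SubmonoidClass.mk_pow I hI', map_pow, pow_card_eq_one']
  exact ⟨hprin.generator, hprin.span_singleton_generator.symm⟩

theorem exists_span_range_add_mul_eq_top {ι : Type*} [Nontrivial ι] {x : ι → R} {y : R}
    (hxy : Ideal.span (insert y (Set.range x)) = ⊤) :
    ∃ s : ι → R, Ideal.span (Set.range fun i => x i + s i * y) = ⊤ := by
  classical
  obtain ⟨i₀, i₁, h01⟩ := exists_pair_ne ι
  rcases eq_or_ne y 0 with rfl | hy
  · exact ⟨0, by simpa [Ideal.span_insert_zero] using hxy⟩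
  obtain ⟨s₀, hs₀⟩ : ∃ s₀ : R, x i₀ + s₀ * y ≠ 0 := by
    by_cases h : x i₀ = 0
    · exact ⟨1, by simpa [h] using hy⟩
    · exact ⟨0, by simpa using h⟩
  have hfin : {v : HeightOneSpectrum R | x i₀ + s₀ * y ∈ v.asIdeal}.Finite := by
    simpa only [← Ideal.dvd_span_singleton] using
      Ideal.finite_factors (I := Ideal.span {x i₀ + s₀ * y}) (by simpa using hs₀)
  -- Make the `i₁`-th coordinate `≡ 1` modulo each of the finitely many primes containing the
  -- `i₀`-th coordinate but not `y`.
  set P := hfin.toFinset.filter fun v => y ∉ v.asIdeal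
  have hcop (v) (hv : v ∈ P) : IsCoprime (Ideal.span {y}) v.asIdeal := by
    obtain ⟨u, i, hi, hui⟩ := v.isMaximal.exists_inv (Finset.mem_filter.mp hv).2
    exact Ideal.isCoprime_iff_exists.mpr ⟨u * y, Ideal.mem_span_singleton'.mpr ⟨u, rfl⟩, i, hi, hui⟩
  obtain ⟨s₁, hs₁⟩ := Ideal.exists_add_mul_sub_one_mem hcop (x i₁)
  set s := Function.update (Pi.single i₀ s₀ : ι → R) i₁ s₁
  refine ⟨s, ?_⟩
  by_contra hne
  obtain ⟨m, hm, hle⟩ := Ideal.exists_le_maximal _ hne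
  have hz (i) : x i + s i * y ∈ m := hle (Ideal.subset_span ⟨i, rfl⟩)
  have hz₀ : x i₀ + s₀ * y ∈ m := by simpa [s, h01] using hz i₀
  by_cases hym : y ∈ m
  · refine hm.ne_top (eq_top_iff.mpr (hxy ▸ Ideal.span_le.mpr ?_))
    rintro _ (rfl | ⟨i, rfl⟩)
    exacts [hym, by simpa using m.sub_mem (hz i) (m.mul_mem_left (s i) hym)]
  · set v : HeightOneSpectrum R := ⟨m, hm.isPrime, fun h => hs₀ (by simpa [h] using hz₀)⟩
    have hvP : v ∈ P := Finset.mem_filter.mpr ⟨hfin.mem_toFinset.mpr hz₀, hym⟩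
    have hz₁ : x i₁ + s₁ * y ∈ m := by simpa [s] using hz i₁
    exact hm.ne_top ((Ideal.eq_top_iff_one m).mpr (by simpa using m.sub_mem hz₁ (hs₁ v hvP)))

namespace HeightOneSpectrum

variable {K : Type*} [Field K] [Algebra R K] [IsFractionRing R K]

variable (R) in
def integralSUnits (S : Set (HeightOneSpectrum R)) : Submonoid R :=
  R⁰ ⊓ ⨅ (v) (_ : v ∉ S), v.asIdeal.primeCompl

theorem mem_integralSUnits {S : Set (HeightOneSpectrum R)} {r : R} :
    r ∈ integralSUnits R S ↔ r ≠ 0 ∧ ∀ v ∉ S, r ∉ v.asIdeal := by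
  simp [integralSUnits, Submonoid.mem_inf, Submonoid.mem_iInf, mem_nonZeroDivisors_iff_ne_zero]

theorem exists_mem_integralSUnits_mul_mem_range {S : Set (HeightOneSpectrum R)}
    [Finite (ClassGroup R)] (z : S.integer K) :
    ∃ m ∈ integralSUnits R S, (z : K) * algebraMap R K m ∈ (algebraMap R K).range := by
  set D : Ideal R := (1 : Submodule R K).colon {(z : K)}
  have mem_D {r : R} : r ∈ D ↔ (z : K) * algebraMap R K r ∈ (algebraMap R K).range := by
    rw [Submodule.mem_colon_singleton, Submodule.mem_one, Algebra.smul_def, mul_comm]; rfl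
  have hD : D ≠ ⊥ := by
    obtain ⟨⟨r, s⟩, hrs⟩ := IsLocalization.surj R⁰ (z : K)
    exact (Submodule.ne_bot_iff _).mpr ⟨s, mem_D.mpr ⟨r, hrs.symm⟩, nonZeroDivisors.ne_zero s.2⟩
  have hDv (v : HeightOneSpectrum R) (hv : v ∉ S) : ¬ D ≤ v.asIdeal := fun hle => by
    obtain ⟨r, d, hrd⟩ := v.exists_primeCompl_mul_eq_of_integer (z : K) (z.2 v hv)
    exact d.2 (hle (mem_D.mpr ⟨r, hrd.symm⟩))
  obtain ⟨k, hk, m, hm⟩ := exists_pow_eq_span_singleton D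
  have hmD : m ∈ D ^ k := hm ▸ Ideal.mem_span_singleton_self m
  refine ⟨m, mem_integralSUnits.mpr ⟨?_, fun v hv hmv => hDv v hv ?_⟩,
    mem_D.mp (Ideal.pow_le_self hk hmD)⟩
  · rintro rfl
    exact pow_ne_zero k hD (by rwa [Ideal.span_singleton_eq_bot.mpr rfl] at hm)
  · exact Ideal.IsPrime.le_of_pow_le (hm ▸ (Ideal.span_singleton_le_iff_mem _).mpr hmv)

theorem isLocalization_integer [Finite (ClassGroup R)] (S : Set (HeightOneSpectrum R)) :
    IsLocalization (integralSUnits R S) (S.integer K) where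
  map_units := by
    rintro ⟨r, hr⟩
    obtain ⟨hr0, hrS⟩ := mem_integralSUnits.mp hr
    have hrK : algebraMap R K r ≠ 0 := (map_ne_zero_iff _ (IsFractionRing.injective R K)).mpr hr0
    refine isUnit_iff_exists_inv.mpr
      ⟨⟨(algebraMap R K r)⁻¹, fun v hv => ?_⟩, Subtype.ext (mul_inv_cancel₀ hrK)⟩
    rw [map_inv₀, valuation_of_algebraMap, intValuation_eq_one_iff.mpr (hrS v hv), inv_one]
  surj z := by
    obtain ⟨m, hm, x, hx⟩ := exists_mem_integralSUnits_mul_mem_range z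
    exact ⟨(x, ⟨m, hm⟩), Subtype.ext hx.symm⟩
  exists_of_eq {x y} h :=
    ⟨1, by rw [IsFractionRing.injective R K (congrArg Subtype.val h)]⟩

theorem isDedekindDomain_integer [Finite (ClassGroup R)] (S : Set (HeightOneSpectrum R)) :
    IsDedekindDomain (S.integer K) :=
  have := isLocalization_integer (K := K) S
  IsLocalization.isDedekindDomain R (M := integralSUnits R S) inf_le_left (S.integer K)

end HeightOneSpectrum

end IsDedekindDomain

section ElementaryOrbit

open Matrix

variable {R : Type*} [CommRing R] {n : ℕ}

theorem Matrix.transvection_mulVec (i j : Fin n) (t : R) (v : Fin n → R) :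
    transvection i j t *ᵥ v = Function.update v i (v i + t * v j) := by
  ext k
  rcases eq_or_ne k i with rfl | hk
  · simp [transvection, add_mulVec, single_mulVec_eq]
  · simp [transvection, add_mulVec, single_mulVec_eq, hk]

variable (n) in
def elementarySubgroup (a : R) : Subgroup (SpecialLinearGroup (Fin n) R) :=
  Subgroup.closure {g | ∃ (i j : Fin n) (hij : i ≠ j) (t : R), t ∈ Ideal.span {a} ∧
    g = elemMatrix i j hij t}

def elementaryOrbit (a : R) (v : Fin n → R) : Set (Fin n → R) :=
  {w | ∃ g ∈ elementarySubgroup n a, (g : Matrix (Fin n) (Fin n) R) *ᵥ v = w}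

variable {a : R}

theorem mem_elementaryOrbit_self (v : Fin n → R) : v ∈ elementaryOrbit a v :=
  ⟨1, one_mem _, by simp⟩

theorem mem_elementaryOrbit_trans {u v w : Fin n → R} (hv : v ∈ elementaryOrbit a u)
    (hw : w ∈ elementaryOrbit a v) : w ∈ elementaryOrbit a u := by
  obtain ⟨g, hg, rfl⟩ := hv
  obtain ⟨h, hh, rfl⟩ := hw
  exact ⟨h * g, mul_mem hh hg, by simp [mulVec_mulVec]⟩

theorem update_add_mul_mem_elementaryOrbit {i j : Fin n} (hij : i ≠ j) {t : R}
    (ht : t ∈ Ideal.span {a}) (v : Fin n → R) :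
    Function.update v i (v i + t * v j) ∈ elementaryOrbit a v :=
  ⟨elemMatrix i j hij t, Subgroup.subset_closure ⟨i, j, hij, t, ht, rfl⟩,
    transvection_mulVec i j t v⟩

variable {m : ℕ}

theorem snoc_add_smul_mem_elementaryOrbit {t : Fin m → R} (ht : ∀ j, t j ∈ Ideal.span {a})
    (u : Fin m → R) (r : R) :
    Fin.snoc (u + r • t) r ∈ elementaryOrbit a (Fin.snoc u r : Fin (m + 1) → R) := by
  classical
  suffices ∀ T : Finset (Fin m), Fin.snoc (u + r • T.piecewise t 0) r ∈
      elementaryOrbit a (Fin.snoc u r : Fin (m + 1) → R) by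
    simpa using this Finset.univ
  intro T
  induction T using Finset.induction_on with
  | empty => simpa using mem_elementaryOrbit_self _
  | insert j T hj ih =>
    refine mem_elementaryOrbit_trans ih ?_
    convert update_add_mul_mem_elementaryOrbit (Fin.castSucc_lt_last j).ne (ht j) _ using 1
    rw [← Fin.snoc_update, Fin.snoc_castSucc, Fin.snoc_last, Finset.piecewise_insert]
    congr 1
    ext k
    rcases eq_or_ne k j with rfl | hk
    · simp [hj, mul_comm]
    · simp [hk]

theorem snoc_add_dotProduct_mem_elementaryOrbit {t : Fin m → R}
    (ht : ∀ j, t j ∈ Ideal.span {a}) (u : Fin m → R) (r : R) :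
    Fin.snoc u (r + t ⬝ᵥ u) ∈ elementaryOrbit a (Fin.snoc u r : Fin (m + 1) → R) := by
  classical
  suffices ∀ T : Finset (Fin m), Fin.snoc u (r + ∑ j ∈ T, t j * u j) ∈
      elementaryOrbit a (Fin.snoc u r : Fin (m + 1) → R) from this Finset.univ
  intro T
  induction T using Finset.induction_on with
  | empty => simpa using mem_elementaryOrbit_self _
  | insert j T hj ih =>
    refine mem_elementaryOrbit_trans ih ?_
    convert update_add_mul_mem_elementaryOrbit (Fin.castSucc_lt_last j).ne' (ht j) _ using 1
    rw [Fin.update_snoc_last, Fin.snoc_castSucc, Fin.snoc_last, Finset.sum_insert hj]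
    ring_nf

theorem snoc_mem_elementaryOrbit_snoc_zero_one [IsDedekindDomain R] (hm : 2 ≤ m)
    {u : Fin m → R} {r : R} (hur : Ideal.span (insert r (Set.range u)) = ⊤)
    (hu : ∀ j, u j ∈ Ideal.span {a ^ 2}) (hr : r - 1 ∈ Ideal.span {a ^ 2}) :
    Fin.snoc u r ∈ elementaryOrbit a (Fin.snoc 0 1 : Fin (m + 1) → R) := by
  choose w hw using fun j => Ideal.mem_span_singleton'.mp (hu j)
  obtain rfl : u = a • a • w := funext fun j => by
    rw [← hw j, Pi.smul_apply, Pi.smul_apply, smul_eq_mul, smul_eq_mul]; ring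
  obtain ⟨b, hb⟩ := Ideal.mem_span_singleton'.mp hr
  have : Nontrivial (Fin m) := Fin.nontrivial_iff_two_le.mpr hm
  obtain ⟨s, hs⟩ :=
    exists_span_range_add_mul_eq_top (Ideal.span_insert_range_eq_top_of_smul hur)
  set z : Fin m → R := fun j => (a • w) j + s j * r
  obtain ⟨c, hc⟩ := Ideal.mem_span_range_iff_exists_fun.mp (hs ▸ Submodule.mem_top : b ∈ _)
  have mem_a (f : Fin m → R) (j : Fin m) : (a • f) j ∈ Ideal.span {a} :=
    Ideal.mem_span_singleton.mpr (dvd_mul_right a _)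
  have h1 := snoc_add_smul_mem_elementaryOrbit (mem_a z) 0 (1 : R)
  have h2 := snoc_add_dotProduct_mem_elementaryOrbit (mem_a c) (a • z) (1 : R)
  have h3 := snoc_add_smul_mem_elementaryOrbit (t := -(a • s))
    (fun j => neg_mem (mem_a s j)) (a • z) r
  have hr' : 1 + (a • c) ⬝ᵥ (a • z) = r := by
    rw [smul_dotProduct, dotProduct_smul, show c ⬝ᵥ z = b from hc, smul_eq_mul, smul_eq_mul]
    linear_combination hb
  have hu' : a • z + r • -(a • s) = a • a • w := by
    funext j
    simp only [Pi.add_apply, Pi.smul_apply, Pi.neg_apply, smul_eq_mul, z]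
    ring
  rw [zero_add, one_smul] at h1
  rw [hr'] at h2
  rw [hu'] at h3
  exact mem_elementaryOrbit_trans h1 (mem_elementaryOrbit_trans h2 h3)

end ElementaryOrbit

theorem lastStdVec_succ (m : ℕ) (R : Type*) [CommRing R] :
    lastStdVec (m + 1) R = Fin.snoc 0 1 := by
  ext i
  induction i using Fin.lastCases with
  | last => simp [lastStdVec]
  | cast j => rw [Fin.snoc_castSucc]; exact if_neg j.isLt.ne

theorem exists_elementary_subgroup_element_mulVec_eq_general
    (K : Type*) [Field K] [NumberField K]
    (S : Finset (HeightOneSpectrum (𝓞 K)))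
    (n : ℕ) (hn : 3 ≤ n)
    (a : (S : Set (HeightOneSpectrum (𝓞 K))).integer K)
    (y : Fin n → (S : Set (HeightOneSpectrum (𝓞 K))).integer K)
    (hy : Ideal.span (Set.range y) = ⊤)
    (hcong : ∀ i : Fin n,
      y i - lastStdVec n ((S : Set (HeightOneSpectrum (𝓞 K))).integer K) i ∈
        Ideal.span {a ^ 2}) :
    ∃ g ∈ Subgroup.closure
        {g : Matrix.SpecialLinearGroup (Fin n) ((S : Set (HeightOneSpectrum (𝓞 K))).integer K) |
          ∃ (i j : Fin n) (hij : i ≠ j) (t : _), t ∈ Ideal.span {a} ∧ g = elemMatrix i j hij t},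
      (g : Matrix (Fin n) (Fin n) ((S : Set (HeightOneSpectrum (𝓞 K))).integer K)).mulVec
        (lastStdVec n _) = y := by
  obtain ⟨m, rfl⟩ : ∃ m, n = m + 1 := ⟨n - 1, by omega⟩
  have := HeightOneSpectrum.isDedekindDomain_integer (K := K) (S : Set (HeightOneSpectrum (𝓞 K)))
  rw [lastStdVec_succ] at hcong ⊢
  rw [← Fin.snoc_init_self y] at hy hcong ⊢
  rw [Fin.range_snoc] at hy
  rw [Fin.forall_fin_succ'] at hcong
  simp only [Fin.snoc_castSucc, Fin.snoc_last, Pi.zero_apply, sub_zero] at hcong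
  exact snoc_mem_elementaryOrbit_snoc_zero_one (by omega) hy hcong.1 hcong.2

/-- Over the ring `𝒪_S` of `S`-integers of a number field `K` and for `n ≥ 3`: for any nonzero
`a ∈ 𝒪_S` and any unimodular vector `y ∈ 𝒪_S^n` with `y ≡ (0, …, 0, 1) (mod a²𝒪_S)`, there is
an element `g` of the subgroup of `SL_n(𝒪_S)` generated by the elementary matrices `e_ij(t)`
with `t ∈ a𝒪_S` such that `g • (0, …, 0, 1) = y`. -/
theorem exists_elementary_subgroup_element_mulVec_eq
    (K : Type*) [Field K] [NumberField K]
    (S : Finset (HeightOneSpectrum (𝓞 K)))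
    (n : ℕ) (hn : 3 ≤ n)
    (a : (S : Set (HeightOneSpectrum (𝓞 K))).integer K) (ha : a ≠ 0)
    (y : Fin n → (S : Set (HeightOneSpectrum (𝓞 K))).integer K)
    (hy : Ideal.span (Set.range y) = ⊤)
    (hcong : ∀ i : Fin n,
      y i - lastStdVec n ((S : Set (HeightOneSpectrum (𝓞 K))).integer K) i ∈
        Ideal.span {a ^ 2}) :
    ∃ g ∈ Subgroup.closure
        {g : Matrix.SpecialLinearGroup (Fin n) ((S : Set (HeightOneSpectrum (𝓞 K))).integer K) |
          ∃ (i j : Fin n) (hij : i ≠ j) (t : _), t ∈ Ideal.span {a} ∧ g = elemMatrix i j hij t},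
      (g : Matrix (Fin n) (Fin n) ((S : Set (HeightOneSpectrum (𝓞 K))).integer K)).mulVec
        (lastStdVec n _) = y :=
  exists_elementary_subgroup_element_mulVec_eq_general K S n hn a y hy hcong
end

section
/- Let m ≥ 2 and let p, q_1, …, q_m be pairwise distinct prime numbers. Then there exist a positive integer n divisible by m! and integers a and b such that a·b = 1 − p^n, a ≡ 0 (mod (q_2 q_3 ⋯ q_m)^m), a is coprime to q_1, b ≡ 0 (mod (q_1 q_3 q_4 ⋯ q_m)^m), and b is coprime to q_2. -/
/-- For `m ≥ 2` and pairwise distinct primes `p, q_1, …, q_m` (here `q_i = q ⟨i-1,_⟩`), there are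
a positive integer `n` divisible by `m!` and integers `a, b` with `a·b = 1 - p^n`,
`(q_2 ⋯ q_m)^m ∣ a`, `a` coprime to `q_1`, `(q_1 q_3 ⋯ q_m)^m ∣ b`, and `b` coprime to `q_2`. -/
theorem exists_factorization_one_sub_pow (m : ℕ) (hm : 2 ≤ m) (p : ℕ) (q : Fin m → ℕ)
    (hp : p.Prime) (hq : ∀ i, (q i).Prime)
    (hpq : ∀ i, p ≠ q i) (hqq : ∀ i j, i ≠ j → q i ≠ q j) :
    ∃ (n : ℕ) (a b : ℤ), 0 < n ∧ m.factorial ∣ n ∧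
      a * b = 1 - (p : ℤ) ^ n ∧
      (∏ i ∈ Finset.univ.erase (⟨0, by omega⟩ : Fin m), (q i : ℤ)) ^ m ∣ a ∧
      IsCoprime a ((q ⟨0, by omega⟩ : ℕ) : ℤ) ∧
      (∏ i ∈ Finset.univ.erase (⟨1, by omega⟩ : Fin m), (q i : ℤ)) ^ m ∣ b ∧
      IsCoprime b ((q ⟨1, by omega⟩ : ℕ) : ℤ) := by
  classical
  set i0 : Fin m := ⟨0, by omega⟩ with hi0
  set i1 : Fin m := ⟨1, by omega⟩ with hi1
  have hi01 : i0 ≠ i1 := by simp [hi0, hi1, Fin.ext_iff]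
  -- pairwise coprimality of the q's
  have hcop : ∀ i j : Fin m, i ≠ j → Nat.Coprime (q i) (q j) := fun i j h =>
    (Nat.coprime_primes (hq i) (hq j)).mpr (hqq i j h)
  -- choose n
  set Qall : ℕ := ∏ i, q i with hQall
  set N : ℕ := Qall ^ (2 * m) with hN
  have hQpos : 0 < Qall := Finset.prod_pos fun i _ => (hq i).pos
  have hNpos : 0 < N := pow_pos hQpos _
  have hpN : Nat.Coprime p N :=
    (Nat.Coprime.prod_right fun i _ => (Nat.coprime_primes hp (hq i)).mpr (hpq i)).pow_right _
  set n : ℕ := N.totient * m.factorial with hn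
  have hnpos : 0 < n := Nat.mul_pos (Nat.totient_pos.mpr hNpos) m.factorial_pos
  have hfacn : m.factorial ∣ n := ⟨N.totient, mul_comm _ _⟩
  have hmodn : p ^ n ≡ 1 [MOD N] := by
    calc p ^ n = (p ^ N.totient) ^ m.factorial := by rw [hn, pow_mul]
    _ ≡ 1 ^ m.factorial [MOD N] := (Nat.ModEq.pow_totient hpN).pow _
    _ = 1 := one_pow _
  have hpn1 : 1 < p ^ n := Nat.one_lt_pow hnpos.ne' hp.one_lt
  set M : ℕ := p ^ n - 1 with hM
  have hMne : M ≠ 0 := by omega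
  have hNM : N ∣ M := (Nat.modEq_iff_dvd' (by omega)).mp hmodn.symm
  have hqM : ∀ i, q i ^ (2 * m) ∣ M := fun i =>
    dvd_trans (pow_dvd_pow_of_dvd (Finset.dvd_prod_of_mem q (Finset.mem_univ i)) _) hNM
  -- the "tail" set of indices ≥ 2
  set S : Finset (Fin m) := (Finset.univ.erase i0).erase i1 with hS
  have hi1S : i1 ∉ S := Finset.notMem_erase _ _
  have hi0S : i0 ∉ S := fun h => Finset.notMem_erase i0 Finset.univ (Finset.mem_of_mem_erase h)
  have hins1 : Finset.univ.erase i0 = insert i1 S := by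
    rw [hS, Finset.insert_erase (Finset.mem_erase.mpr ⟨hi01.symm, Finset.mem_univ _⟩)]
  have hins0 : Finset.univ.erase i1 = insert i0 S := by
    rw [hS, Finset.erase_right_comm,
      Finset.insert_erase (Finset.mem_erase.mpr ⟨hi01, Finset.mem_univ _⟩)]
  set P : ℕ := ∏ i ∈ S, q i with hP
  -- define A
  set s : ℕ := M.factorization (q i1) with hs
  set A : ℕ := q i1 ^ s * P ^ m with hA
  have hs2m : 2 * m ≤ s := ((hq i1).pow_dvd_iff_le_factorization hMne).mp (hqM i1)
  have hcopP : ∀ i : Fin m, i ∉ S → Nat.Coprime (q i) P :=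
    fun i hi => Nat.Coprime.prod_right fun j hj => hcop i j (fun h => hi (h ▸ hj))
  have hq1s : q i1 ^ s ∣ M := Nat.ordProj_dvd M _
  have hPM : P ^ m ∣ M := by
    have h1 : P ∣ Qall := Finset.prod_dvd_prod_of_subset _ _ _ (Finset.subset_univ S)
    calc P ^ m ∣ Qall ^ m := pow_dvd_pow_of_dvd h1 m
    _ ∣ Qall ^ (2 * m) := pow_dvd_pow _ (by omega)
    _ ∣ M := hNM
  have hcopAparts : Nat.Coprime (q i1 ^ s) (P ^ m) :=
    ((hcopP i1 hi1S).pow_right m).pow_left s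
  have hAM : A ∣ M := hcopAparts.mul_dvd_of_dvd_of_dvd hq1s hPM
  set B : ℕ := M / A with hB
  have hMAB : M = A * B := (Nat.mul_div_cancel' hAM).symm
  -- coprime A (q i0)
  have hcopA0 : Nat.Coprime A (q i0) :=
    Nat.Coprime.mul ((hcop i1 i0 hi01.symm).pow_left s) (((hcopP i0 hi0S).symm).pow_left m)
  -- q i1 does not divide B
  have hq1B : ¬ q i1 ∣ B := by
    intro hdvd
    have : q i1 ^ (s + 1) ∣ M := by
      rw [hMAB, hA, pow_succ]
      exact mul_dvd_mul (dvd_mul_right _ _) hdvd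
    exact Nat.pow_succ_factorization_not_dvd hMne (hq i1) this
  have hcopB1 : Nat.Coprime B (q i1) := ((hq i1).coprime_iff_not_dvd.mpr hq1B).symm
  -- each q i ^ m divides B for i ≠ i1
  have hqB : ∀ i ∈ Finset.univ.erase i1, q i ^ m ∣ B := by
    intro i hi
    rw [hins0] at hi
    rcases Finset.mem_insert.mp hi with h | h
    · subst h
      have h1 : q i0 ^ (2 * m) ∣ B * A := by rw [Nat.mul_comm B A, ← hMAB]; exact hqM i0
      have h2 : Nat.Coprime (q i0 ^ (2 * m)) A := (hcopA0.symm.pow_left _)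
      exact dvd_trans (pow_dvd_pow _ (by omega)) (h2.dvd_of_dvd_mul_right h1)
    · -- i ∈ S
      set A' : ℕ := q i1 ^ s * ∏ j ∈ S.erase i, q j ^ m with hA'
      have hAeq : A = q i ^ m * A' := by
        rw [hA, hA', ← Finset.prod_pow, ← Finset.mul_prod_erase _ _ h]; ring
      have hii1 : i ≠ i1 := fun he => hi1S (he ▸ h)
      have hcopiA' : Nat.Coprime (q i ^ m) A' :=
        Nat.Coprime.mul_right ((hcop i i1 hii1).pow _ _)
          (Nat.Coprime.prod_right fun j hj => (hcop i j (Finset.ne_of_mem_erase hj).symm).pow _ _)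
      have h1 : q i ^ m * q i ^ m ∣ q i ^ m * (A' * B) := by
        rw [← mul_assoc, ← hAeq, ← hMAB, ← pow_add]
        have : m + m = 2 * m := by ring
        rw [this]; exact hqM i
      have h2 : q i ^ m ∣ A' * B :=
        (Nat.mul_dvd_mul_iff_left (pow_pos (hq i).pos m)).mp h1
      exact hcopiA'.dvd_of_dvd_mul_left h2
  -- assemble
  refine ⟨n, (A : ℤ), -(B : ℤ), hnpos, hfacn, ?_, ?_, ?_, ?_, ?_⟩
  · have : (M : ℤ) = (p : ℤ) ^ n - 1 := by
      rw [hM]; push_cast [Nat.cast_sub (le_of_lt hpn1)]; ring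
    rw [mul_neg, ← Nat.cast_mul, ← hMAB, this]; ring
  · -- (∏ i ∈ erase i0, q i)^m ∣ A
    have h1 : (∏ i ∈ Finset.univ.erase i0, (q i : ℤ)) = (q i1 : ℤ) * (P : ℤ) := by
      rw [hins1, Finset.prod_insert hi1S, hP]; push_cast; ring
    rw [h1, mul_pow]
    have h2 : (q i1 : ℤ) ^ m * (P:ℤ) ^ m ∣ (q i1 :ℤ) ^ s * (P:ℤ) ^ m :=
      mul_dvd_mul (pow_dvd_pow _ (by omega)) dvd_rfl
    refine h2.trans ?_
    rw [hA]; push_cast; rfl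
  · exact Nat.isCoprime_iff_coprime.mpr hcopA0
  · -- (∏ i ∈ erase i1, q i)^m ∣ -B
    rw [← Finset.prod_pow, dvd_neg]
    refine Finset.prod_dvd_of_coprime ?_ ?_
    · intro i hi j hj hij
      exact (Nat.isCoprime_iff_coprime.mpr (hcop i j hij)).pow
    · intro i hi
      have := hqB i hi
      have h := Int.natCast_dvd_natCast.mpr this
      push_cast at h
      exact h
  · exact (Nat.isCoprime_iff_coprime.mpr hcopB1).neg_left
end

section
/- Let Ĝ be a Hausdorff topological group and Γ a dense subgroup of Ĝ such that every normal subgroup of Γ is either contained in the center of Γ or equal to Γ. Let C be a normal subgroup of Ĝ and let σ be a continuous automorphism of Ĝ (with continuous inverse) such that σ(Γ) ⊆ Γ and σ(c) = c for every c ∈ C. Suppose there exists γ₀ ∈ Γ such that γ₀·σ(γ₀)⁻¹ does not lie in the center of Γ (i.e., it fails to commute with some element of Γ). Then C is contained in the center of Ĝ: every element of C commutes with every element of Ĝ. -/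
/-! The elements `γ * σ(γ)⁻¹`, `γ ∈ Γ`, centralize `C`: conjugating `c ∈ C` by `γ` or by `σ γ`
gives the same result, since `σ` fixes `C` pointwise and `C` is normal. Hence `Γ ∩ Z_G(C)` is a
normal subgroup of `Γ` which is not central (it contains `γ₀ * σ(γ₀)⁻¹`), so it is all of `Γ`.
Thus the dense subgroup `Γ` lies in the centralizer of `C`, which is closed, hence everything. -/

open Subgroup

theorem Set.centralizer_eq_univ_of_dense {M : Type*} [Mul M] [TopologicalSpace M]
    [SeparatelyContinuousMul M] [T2Space M] {s t : Set M} (hs : Dense s)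
    (hst : s ⊆ Set.centralizer t) : Set.centralizer t = Set.univ :=
  Set.eq_univ_of_univ_subset <| hs.closure_eq ▸ closure_minimal hst (Set.isClosed_centralizer t)

theorem Subgroup.mul_inv_map_mem_centralizer {G F : Type*} [Group G] [FunLike F G G]
    [MonoidHomClass F G G] {C : Subgroup G} [C.Normal] {σ : F} (hσC : ∀ c ∈ C, σ c = c)
    (γ : G) : γ * (σ γ)⁻¹ ∈ centralizer (C : Set G) := by
  rw [mem_centralizer_iff]
  intro c hc
  have hconj : σ (γ⁻¹ * c * γ) = γ⁻¹ * c * γ :=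
    hσC _ (by simpa using Normal.conj_mem inferInstance c hc γ⁻¹)
  rw [map_mul, map_mul, map_inv, hσC c hc] at hconj
  calc c * (γ * (σ γ)⁻¹) = γ * ((σ γ)⁻¹ * c * σ γ) * (σ γ)⁻¹ := by rw [hconj]; group
    _ = γ * (σ γ)⁻¹ * c := by group

theorem dense_subgroup_automorphism_central_general
    (G : Type*) [Group G] [TopologicalSpace G] [IsTopologicalGroup G] [T2Space G]
    (Γ : Subgroup G) (hdense : Dense (Γ : Set G))
    (hΓ : ∀ N : Subgroup G, N ≤ Γ → (∀ g ∈ Γ, ∀ x ∈ N, g * x * g⁻¹ ∈ N) →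
      (∀ x ∈ N, ∀ γ ∈ Γ, Commute x γ) ∨ N = Γ)
    (C : Subgroup G) (hC : C.Normal)
    (σ : G ≃* G)
    (hσΓ : ∀ γ ∈ Γ, σ γ ∈ Γ)
    (hσC : ∀ c ∈ C, σ c = c)
    (γ₀ : G) (hγ₀ : γ₀ ∈ Γ)
    (hnc : ∃ δ ∈ Γ, ¬ Commute (γ₀ * (σ γ₀)⁻¹) δ) :
    ∀ c ∈ C, ∀ g : G, Commute c g := by
  obtain ⟨δ, hδ, hδnc⟩ := hnc
  have hconj : ∀ g ∈ Γ, ∀ x ∈ Γ ⊓ centralizer (C : Set G),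
      g * x * g⁻¹ ∈ Γ ⊓ centralizer (C : Set G) := fun g hg x hx =>
    ⟨Γ.mul_mem (Γ.mul_mem hg hx.1) (Γ.inv_mem hg),
      (@normal_centralizer _ _ C hC).conj_mem x hx.2 g⟩
  have hγ₀σ : γ₀ * (σ γ₀)⁻¹ ∈ Γ ⊓ centralizer (C : Set G) :=
    ⟨Γ.mul_mem hγ₀ (Γ.inv_mem (hσΓ γ₀ hγ₀)), mul_inv_map_mem_centralizer hσC γ₀⟩
  have hΓC : (Γ : Set G) ⊆ Set.centralizer C := by
    rcases hΓ _ inf_le_left hconj with hcentral | heq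
    · exact absurd (hcentral _ hγ₀σ δ hδ) hδnc
    · exact (inf_eq_left.mp heq : Γ ≤ centralizer (C : Set G))
  intro c hc g
  have hg : g ∈ Set.centralizer (C : Set G) := by
    rw [Set.centralizer_eq_univ_of_dense hdense hΓC]; trivial
  exact hg c hc

/-- Let `Ĝ` be a Hausdorff topological group and `Γ` a dense subgroup such that every subgroup
of `Γ` which is normal in `Γ` is either contained in the center of `Γ` or equal to `Γ`.  Let
`C` be a normal subgroup of `Ĝ` and `σ` a continuous automorphism of `Ĝ` (with continuous
inverse) with `σ(Γ) ⊆ Γ` fixing `C` pointwise.  If some `γ₀ ∈ Γ` is such that `γ₀·σ(γ₀)⁻¹`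
fails to commute with some element of `Γ`, then `C` is contained in the center of `Ĝ`. -/
theorem dense_subgroup_automorphism_central
    (G : Type*) [Group G] [TopologicalSpace G] [IsTopologicalGroup G] [T2Space G]
    (Γ : Subgroup G) (hdense : Dense (Γ : Set G))
    (hΓ : ∀ N : Subgroup G, N ≤ Γ → (∀ g ∈ Γ, ∀ x ∈ N, g * x * g⁻¹ ∈ N) →
      (∀ x ∈ N, ∀ γ ∈ Γ, Commute x γ) ∨ N = Γ)
    (C : Subgroup G) (hC : C.Normal)
    (σ : G ≃* G) (hσcont : Continuous σ) (hσinv : Continuous σ.symm)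
    (hσΓ : ∀ γ ∈ Γ, σ γ ∈ Γ)
    (hσC : ∀ c ∈ C, σ c = c)
    (γ₀ : G) (hγ₀ : γ₀ ∈ Γ)
    (hnc : ∃ δ ∈ Γ, ¬ Commute (γ₀ * (σ γ₀)⁻¹) δ) :
    ∀ c ∈ C, ∀ g : G, Commute c g :=
  dense_subgroup_automorphism_central_general G Γ hdense hΓ C hC σ hσΓ hσC γ₀ hγ₀ hnc
end

section
/- Let K be a number field, S a finite set of places of K containing all archimedean places, 𝒪_S the ring of S-integers, and n ≥ 3. Then for every normal subgroup N of finite index in SL_n(𝒪_S), there exists a nonzero ideal 𝔞 of 𝒪_S such that N contains every elementary matrix e_ij(t) with i ≠ j and t ∈ 𝔞 (and hence N contains the normal subgroup E_n(𝔞) of SL_n(𝒪_S) generated by these elementary matrices). -/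
open IsDedekindDomain NumberField

/-!
If `N` is normal of finite index `m`, then `g ^ m ∈ N` for every `g`. Since
`e_ij(t) ^ m = e_ij(m t)`, the subgroup `N` contains `e_ij(t)` for all `t` in the principal
ideal `(m)`, which is nonzero because `𝒪_S` has characteristic zero.
-/

section ElemMatrix

variable {n : ℕ} {R : Type*} [CommRing R]

@[simp]
lemma elemMatrix_zero (i j : Fin n) (hij : i ≠ j) : elemMatrix i j hij (0 : R) = 1 :=
  Subtype.ext (Matrix.transvection_zero i j)

lemma elemMatrix_mul_elemMatrix (i j : Fin n) (hij : i ≠ j) (s t : R) :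
    elemMatrix i j hij s * elemMatrix i j hij t = elemMatrix i j hij (s + t) :=
  Subtype.ext (Matrix.transvection_mul_transvection_same i j hij s t)

lemma elemMatrix_pow (i j : Fin n) (hij : i ≠ j) (t : R) (k : ℕ) :
    elemMatrix i j hij t ^ k = elemMatrix i j hij (k * t) := by
  induction k with
  | zero => simp
  | succ k ih => rw [pow_succ, ih, elemMatrix_mul_elemMatrix, Nat.cast_succ, add_one_mul]

lemma elemMatrix_mem_of_mem_span_index (N : Subgroup (Matrix.SpecialLinearGroup (Fin n) R))
    [N.Normal] (i j : Fin n) (hij : i ≠ j) {t : R} (ht : t ∈ Ideal.span {(N.index : R)}) :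
    elemMatrix i j hij t ∈ N := by
  obtain ⟨c, rfl⟩ := Ideal.mem_span_singleton'.mp ht
  rw [mul_comm, ← elemMatrix_pow]
  exact N.pow_index_mem _

lemma exists_ideal_ne_bot_forall_elemMatrix_mem [CharZero R]
    (N : Subgroup (Matrix.SpecialLinearGroup (Fin n) R)) [N.Normal] [N.FiniteIndex] :
    ∃ 𝔞 : Ideal R, 𝔞 ≠ ⊥ ∧ ∀ (i j : Fin n) (hij : i ≠ j), ∀ t ∈ 𝔞, elemMatrix i j hij t ∈ N :=
  ⟨Ideal.span {(N.index : R)},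
    by simpa [Ideal.span_singleton_eq_bot] using Subgroup.FiniteIndex.index_ne_zero,
    fun i j hij _ ht ↦ elemMatrix_mem_of_mem_span_index N i j hij ht⟩

end ElemMatrix

theorem normal_subgroup_contains_elementary_of_ideal_general
    (K : Type*) [Field K] [NumberField K]
    (S : Finset (HeightOneSpectrum (𝓞 K)))
    (n : ℕ)
    (N : Subgroup (Matrix.SpecialLinearGroup (Fin n)
      ((S : Set (HeightOneSpectrum (𝓞 K))).integer K)))
    (hNnormal : N.Normal) (hNindex : N.FiniteIndex) :
    ∃ 𝔞 : Ideal ((S : Set (HeightOneSpectrum (𝓞 K))).integer K), 𝔞 ≠ ⊥ ∧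
      ∀ (i j : Fin n) (hij : i ≠ j), ∀ t ∈ 𝔞, elemMatrix i j hij t ∈ N :=
  exists_ideal_ne_bot_forall_elemMatrix_mem N

/-- Over the ring `𝒪_S` of `S`-integers of a number field `K` and `n ≥ 3`: every normal
subgroup `N` of finite index in `SL_n(𝒪_S)` contains all elementary matrices `e_ij(t)` with
`t` in some nonzero ideal `𝔞` of `𝒪_S` (hence contains the normal subgroup `E_n(𝔞)` they
generate). -/
theorem normal_subgroup_contains_elementary_of_ideal
    (K : Type*) [Field K] [NumberField K]
    (S : Finset (HeightOneSpectrum (𝓞 K)))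
    (n : ℕ) (hn : 3 ≤ n)
    (N : Subgroup (Matrix.SpecialLinearGroup (Fin n)
      ((S : Set (HeightOneSpectrum (𝓞 K))).integer K)))
    (hNnormal : N.Normal) (hNindex : N.FiniteIndex) :
    ∃ 𝔞 : Ideal ((S : Set (HeightOneSpectrum (𝓞 K))).integer K), 𝔞 ≠ ⊥ ∧
      ∀ (i j : Fin n) (hij : i ≠ j), ∀ t ∈ 𝔞, elemMatrix i j hij t ∈ N :=
  normal_subgroup_contains_elementary_of_ideal_general K S n N hNnormal hNindex
end
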